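/- Let T_{p₁,…,p_ℓ} and T_{p'₁,…,p'_ℓ} be ℓ-dimensional torus CCs with p_j ≥ 3 and p'_j ≥ 3 for all j. Then the map on cells induced by coordinatewise reduction of nodes modulo (p₁,…,p_ℓ) is a CC covering of T_{p₁,…,p_ℓ} by T_{p₁p'₁,…,p_ℓp'_ℓ}, and similarly the map induced by coordinatewise reduction modulo (p'₁,…,p'_ℓ) is a CC covering of T_{p'₁,…,p'_ℓ} by T_{p₁p'₁,…,p_ℓp'_ℓ}. -/

import Mathlib

/-! Basic framework: combinatorial complexes, natural neighborhood functions,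
CC coverings, Hasse graphs, and higher-order message-passing (HOMP) models. -/

namespace TDL

/-- The raw data of a combinatorial complex over an ambient node type `S`:
a set of cells (finite, nonempty subsets of nodes) and a rank function. -/
structure PreCC (S : Type*) where
  cells : Set (Finset S)
  rk : Finset S → ℕ

/-- A (featureless) combinatorial complex.  The node set is implicitly the set of
elements appearing in cells; every singleton of such a node is a cell of rank `0`,
cells are nonempty, there are finitely many cells, and the rank function is
monotone with respect to inclusion. -/
structure CC (S : Type*) extends PreCC S where
  cells_finite : cells.Finite
  nonempty_of_mem : ∀ x ∈ cells, x.Nonempty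
  singleton_mem : ∀ x ∈ cells, ∀ s ∈ x, ({s} : Finset S) ∈ cells
  rk_singleton : ∀ s : S, ({s} : Finset S) ∈ cells → rk {s} = 0
  rk_mono : ∀ x ∈ cells, ∀ y ∈ cells, x ⊆ y → rk x ≤ rk y

/-- Names of the natural neighborhood functions: `(r₁,r₂)`-adjacency,
coadjacency, incidence and co-incidence. -/
inductive NbhdKind : Type
  | adj (r₁ r₂ : ℕ)
  | coadj (r₁ r₂ : ℕ)
  | inc (r₁ r₂ : ℕ)
  | coinc (r₁ r₂ : ℕ)
  deriving DecidableEq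

/-- The two ranks mentioned by a neighborhood kind are bounded by `ℓ`. -/
def NbhdKind.bounded (ℓ : ℕ) : NbhdKind → Prop
  | .adj r₁ r₂ => r₁ ≤ ℓ ∧ r₂ ≤ ℓ
  | .coadj r₁ r₂ => r₁ ≤ ℓ ∧ r₂ ≤ ℓ
  | .inc r₁ r₂ => r₁ ≤ ℓ ∧ r₂ ≤ ℓ
  | .coinc r₁ r₂ => r₁ ≤ ℓ ∧ r₂ ≤ ℓ

namespace PreCC

variable {S : Type*}

/-- The `r`-skeleton: the set of cells of rank `r`. -/
def skel (X : PreCC S) (r : ℕ) : Set (Finset S) := {x | x ∈ X.cells ∧ X.rk x = r}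

/-- The natural neighborhood functions of a complex. -/
def nbhd (X : PreCC S) : NbhdKind → Finset S → Set (Finset S)
  | .adj r₁ r₂, x => {y | x ∈ X.skel r₁ ∧ y ∈ X.skel r₁ ∧ ∃ z ∈ X.skel r₂, x ⊆ z ∧ y ⊆ z}
  | .coadj r₁ r₂, x => {y | x ∈ X.skel r₁ ∧ y ∈ X.skel r₁ ∧ ∃ z ∈ X.skel r₂, z ⊆ x ∧ z ⊆ y}
  | .inc r₁ r₂, x => {y | x ∈ X.skel r₁ ∧ y ∈ X.skel r₂ ∧ x ⊆ y}
  | .coinc r₁ r₂, x => {y | x ∈ X.skel r₁ ∧ y ∈ X.skel r₂ ∧ y ⊆ x}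

/-- The Hasse graph of a complex: vertices are cells, and `x, y` are joined by an
edge whenever `x ⊆ y` and `rk x = rk y - 1` (or symmetrically). -/
def hasse (X : PreCC S) : SimpleGraph {x : Finset S // x ∈ X.cells} where
  Adj a b := (a.1 ⊆ b.1 ∧ X.rk a.1 + 1 = X.rk b.1) ∨ (b.1 ⊆ a.1 ∧ X.rk b.1 + 1 = X.rk a.1)
  symm := by
    constructor
    rintro a b (h | h)
    · exact Or.inr h
    · exact Or.inl h
  loopless := by constructor <;> rintro a (⟨-, h⟩ | ⟨-, h⟩) <;> omega

end PreCC

/-- `ρ` is a CC covering of `X` by `Xt`: it maps cells of `Xt` to cells of `X`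
surjectively, preserves ranks, and is a local isomorphism with respect to every
natural neighborhood function. -/
structure IsCovering {S' S : Type*} (Xt : PreCC S') (X : PreCC S)
    (ρ : Finset S' → Finset S) : Prop where
  mem : ∀ x' ∈ Xt.cells, ρ x' ∈ X.cells
  surj : ∀ x ∈ X.cells, ∃ x' ∈ Xt.cells, ρ x' = x
  rank : ∀ x' ∈ Xt.cells, X.rk (ρ x') = Xt.rk x'
  locBij : ∀ x' ∈ Xt.cells, ∀ N : NbhdKind, Set.BijOn ρ (Xt.nbhd N x') (X.nbhd N (ρ x'))

open Classical in
/-- The multiset underlying a finite set (junk value `0` for infinite sets). -/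
noncomputable def setMultiset {α : Type*} (s : Set α) : Multiset α :=
  if h : s.Finite then h.toFinset.val else 0

/-- A higher-order message-passing (HOMP) model over a feature space `D`, for
featureless complexes of dimension at most `ℓ`: a number of layers `T`, an initial
constant feature, and, per layer, message functions (per neighborhood function and
rank), permutation-invariant aggregations (functions of multisets), a combination
operator over the family of neighborhood functions with ranks at most `ℓ`,
activations, and a readout defined on multisets. -/
structure HOMP (D : Type*) (ℓ : ℕ) where
  T : ℕ
  init : D
  msg : ℕ → NbhdKind → ℕ → D → D → D
  agg : ℕ → NbhdKind → Multiset D → D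
  comb : ℕ → ({N : NbhdKind // N.bounded ℓ} → D) → D
  act : ℕ → D → D
  readout : Multiset D → D

namespace HOMP

variable {D : Type*} {ℓ : ℕ} {S : Type*}

/-- The cell feature maps computed by a HOMP model on a complex:
`h⁰_x` is the initial constant, and
`h^{t+1}_x = β_t (⊗_N (⊕ {{ m_{t,N,rk x}(h^t_x, h^t_y) : y ∈ N(x) }}))`. -/
noncomputable def feat (M : HOMP D ℓ) (X : PreCC S) : ℕ → Finset S → D
  | 0, _ => M.init
  | t + 1, x =>
      M.act t <| M.comb t fun N =>
        M.agg t N.1 <|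
          (setMultiset (X.nbhd N.1 x)).map fun y =>
            M.msg t N.1 (X.rk x) (M.feat X t x) (M.feat X t y)

/-- The output of a HOMP model: the readout of the multiset of final features. -/
noncomputable def out (M : HOMP D ℓ) (X : PreCC S) : D :=
  M.readout <| (setMultiset X.cells).map fun x => M.feat X M.T x

end HOMP

end TDL

namespace TDL

/-- The cell `s_k` of the `ℓ`-dimensional torus: the set of nodes `s + k'` for
`k' ≤ k`, with coordinatewise addition modulo `p j`. -/
def torusCell {ℓ : ℕ} (p : Fin ℓ → ℕ) (s : ∀ i, ZMod (p i)) (k : Fin ℓ → Bool) :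
    Finset (∀ i, ZMod (p i)) :=
  (Finset.univ.filter fun k' : Fin ℓ → Bool => ∀ i, k' i = true → k i = true).image
    fun k' i => s i + if k' i then 1 else 0

/-- The number of ones in `k ∈ {0,1}^ℓ`, i.e. the rank of the cell `s_k`. -/
def torusRank {ℓ : ℕ} (k : Fin ℓ → Bool) : ℕ :=
  (Finset.univ.filter fun i => k i = true).card

/-- The `ℓ`-dimensional torus combinatorial complex `T_{p₁,…,p_ℓ}`: nodes are
`ℤ/p₁ × ⋯ × ℤ/p_ℓ`, cells are the sets `s_k`, and the rank of `s_k` is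
`k₁ + ⋯ + k_ℓ`. -/
noncomputable def torusPre {ℓ : ℕ} (p : Fin ℓ → ℕ) : PreCC (∀ i, ZMod (p i)) where
  cells := {x | ∃ s k, x = torusCell p s k}
  rk x := sInf {r | ∃ s k, x = torusCell p s k ∧ r = torusRank k}

end TDL

/-!
The torus `T_q` is the product of the cycles `ℤ/q_i`, and its cell `s_k` is the product of the
arcs `{s_i}` (if `k_i = 0`) or `{s_i, s_i + 1}` (if `k_i = 1`). On a cycle of length at least `3`
an arc determines its start and its length, and `[a, a + b] ⊆ [t, t + c]` holds iff `a = t + d`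
with `b + d ≤ c`. Hence every inclusion in `T_q` lifts along the reduction to `T_p` (for
`p_i ∣ q_i`), and two cells reached from a cell `x` through a common superset (or subset) of `x`
are offsets of each other by at most `2` in each coordinate, so they stay distinct modulo
`p_i ≥ 3`. A rank-preserving surjective cell map with these two properties maps every
neighborhood `𝒩(x)` bijectively onto `𝒩(ρ x)`, since each natural neighborhood is described by
at most two inclusions through an intermediate cell.
-/

namespace TDL

section InclusionCovering

variable {S' S : Type*}

structure IsInclusionCovering (Xt : PreCC S') (X : PreCC S) (ρ : Finset S' → Finset S) :
    Prop where
  mem : ∀ x ∈ Xt.cells, ρ x ∈ X.cells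
  surj : ∀ x ∈ X.cells, ∃ x' ∈ Xt.cells, ρ x' = x
  rank : ∀ x ∈ Xt.cells, X.rk (ρ x) = Xt.rk x
  mono : ∀ x ∈ Xt.cells, ∀ y ∈ Xt.cells, x ⊆ y → ρ x ⊆ ρ y
  exists_lift_superset :
    ∀ x ∈ Xt.cells, ∀ y ∈ X.cells, ρ x ⊆ y → ∃ y' ∈ Xt.cells, x ⊆ y' ∧ ρ y' = y
  exists_lift_subset :
    ∀ x ∈ Xt.cells, ∀ y ∈ X.cells, y ⊆ ρ x → ∃ y' ∈ Xt.cells, y' ⊆ x ∧ ρ y' = y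
  eq_of_common_superset : ∀ x ∈ Xt.cells, ∀ y₁ ∈ Xt.cells, ∀ y₂ ∈ Xt.cells,
    ∀ z₁ ∈ Xt.cells, ∀ z₂ ∈ Xt.cells,
    x ⊆ z₁ → y₁ ⊆ z₁ → x ⊆ z₂ → y₂ ⊆ z₂ → ρ y₁ = ρ y₂ → y₁ = y₂
  eq_of_common_subset : ∀ x ∈ Xt.cells, ∀ y₁ ∈ Xt.cells, ∀ y₂ ∈ Xt.cells,
    ∀ z₁ ∈ Xt.cells, ∀ z₂ ∈ Xt.cells,
    z₁ ⊆ x → z₁ ⊆ y₁ → z₂ ⊆ x → z₂ ⊆ y₂ → ρ y₁ = ρ y₂ → y₁ = y₂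

namespace IsInclusionCovering

variable {Xt : PreCC S'} {X : PreCC S} {ρ : Finset S' → Finset S} {x : Finset S'}

theorem map_mem_skel_iff (h : IsInclusionCovering Xt X ρ) (hx : x ∈ Xt.cells) {r : ℕ} :
    ρ x ∈ X.skel r ↔ x ∈ Xt.skel r := by
  simp only [PreCC.skel, Set.mem_ofPred_eq, h.rank x hx, hx, h.mem x hx, true_and]

theorem bijOn_adj (h : IsInclusionCovering Xt X ρ) (hx : x ∈ Xt.cells) (r₁ r₂ : ℕ) :
    Set.BijOn ρ (Xt.nbhd (.adj r₁ r₂) x) (X.nbhd (.adj r₁ r₂) (ρ x)) := by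
  refine ⟨?_, ?_, ?_⟩
  · rintro y ⟨hx₁, hy₁, z, hz₂, hxz, hyz⟩
    exact ⟨(h.map_mem_skel_iff hx).2 hx₁, (h.map_mem_skel_iff hy₁.1).2 hy₁, ρ z,
      (h.map_mem_skel_iff hz₂.1).2 hz₂, h.mono x hx z hz₂.1 hxz, h.mono y hy₁.1 z hz₂.1 hyz⟩
  · rintro y₁ ⟨-, hy₁, z₁, hz₁, hxz₁, hyz₁⟩ y₂ ⟨-, hy₂, z₂, hz₂, hxz₂, hyz₂⟩
    exact h.eq_of_common_superset x hx y₁ hy₁.1 y₂ hy₂.1 z₁ hz₁.1 z₂ hz₂.1 hxz₁ hyz₁ hxz₂ hyz₂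
  · rintro y ⟨hx₁, hy₁, z, hz₂, hxz, hyz⟩
    obtain ⟨z', hz', hxz', rfl⟩ := h.exists_lift_superset x hx z hz₂.1 hxz
    obtain ⟨y', hy', hyz', rfl⟩ := h.exists_lift_subset z' hz' y hy₁.1 hyz
    exact ⟨y', ⟨(h.map_mem_skel_iff hx).1 hx₁, (h.map_mem_skel_iff hy').1 hy₁, z',
      (h.map_mem_skel_iff hz').1 hz₂, hxz', hyz'⟩, rfl⟩

theorem bijOn_coadj (h : IsInclusionCovering Xt X ρ) (hx : x ∈ Xt.cells) (r₁ r₂ : ℕ) :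
    Set.BijOn ρ (Xt.nbhd (.coadj r₁ r₂) x) (X.nbhd (.coadj r₁ r₂) (ρ x)) := by
  refine ⟨?_, ?_, ?_⟩
  · rintro y ⟨hx₁, hy₁, z, hz₂, hzx, hzy⟩
    exact ⟨(h.map_mem_skel_iff hx).2 hx₁, (h.map_mem_skel_iff hy₁.1).2 hy₁, ρ z,
      (h.map_mem_skel_iff hz₂.1).2 hz₂, h.mono z hz₂.1 x hx hzx, h.mono z hz₂.1 y hy₁.1 hzy⟩
  · rintro y₁ ⟨-, hy₁, z₁, hz₁, hzx₁, hzy₁⟩ y₂ ⟨-, hy₂, z₂, hz₂, hzx₂, hzy₂⟩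
    exact h.eq_of_common_subset x hx y₁ hy₁.1 y₂ hy₂.1 z₁ hz₁.1 z₂ hz₂.1 hzx₁ hzy₁ hzx₂ hzy₂
  · rintro y ⟨hx₁, hy₁, z, hz₂, hzx, hzy⟩
    obtain ⟨z', hz', hzx', rfl⟩ := h.exists_lift_subset x hx z hz₂.1 hzx
    obtain ⟨y', hy', hzy', rfl⟩ := h.exists_lift_superset z' hz' y hy₁.1 hzy
    exact ⟨y', ⟨(h.map_mem_skel_iff hx).1 hx₁, (h.map_mem_skel_iff hy').1 hy₁, z',
      (h.map_mem_skel_iff hz').1 hz₂, hzx', hzy'⟩, rfl⟩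

theorem bijOn_inc (h : IsInclusionCovering Xt X ρ) (hx : x ∈ Xt.cells) (r₁ r₂ : ℕ) :
    Set.BijOn ρ (Xt.nbhd (.inc r₁ r₂) x) (X.nbhd (.inc r₁ r₂) (ρ x)) := by
  refine ⟨?_, ?_, ?_⟩
  · rintro y ⟨hx₁, hy₂, hxy⟩
    exact ⟨(h.map_mem_skel_iff hx).2 hx₁, (h.map_mem_skel_iff hy₂.1).2 hy₂,
      h.mono x hx y hy₂.1 hxy⟩
  · rintro y₁ ⟨-, hy₁, hxy₁⟩ y₂ ⟨-, hy₂, hxy₂⟩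
    exact h.eq_of_common_superset x hx y₁ hy₁.1 y₂ hy₂.1 y₁ hy₁.1 y₂ hy₂.1
      hxy₁ subset_rfl hxy₂ subset_rfl
  · rintro y ⟨hx₁, hy₂, hxy⟩
    obtain ⟨y', hy', hxy', rfl⟩ := h.exists_lift_superset x hx y hy₂.1 hxy
    exact ⟨y', ⟨(h.map_mem_skel_iff hx).1 hx₁, (h.map_mem_skel_iff hy').1 hy₂, hxy'⟩, rfl⟩

theorem bijOn_coinc (h : IsInclusionCovering Xt X ρ) (hx : x ∈ Xt.cells) (r₁ r₂ : ℕ) :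
    Set.BijOn ρ (Xt.nbhd (.coinc r₁ r₂) x) (X.nbhd (.coinc r₁ r₂) (ρ x)) := by
  refine ⟨?_, ?_, ?_⟩
  · rintro y ⟨hx₁, hy₂, hyx⟩
    exact ⟨(h.map_mem_skel_iff hx).2 hx₁, (h.map_mem_skel_iff hy₂.1).2 hy₂,
      h.mono y hy₂.1 x hx hyx⟩
  · rintro y₁ ⟨-, hy₁, hyx₁⟩ y₂ ⟨-, hy₂, hyx₂⟩
    exact h.eq_of_common_subset x hx y₁ hy₁.1 y₂ hy₂.1 y₁ hy₁.1 y₂ hy₂.1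
      hyx₁ subset_rfl hyx₂ subset_rfl
  · rintro y ⟨hx₁, hy₂, hyx⟩
    obtain ⟨y', hy', hyx', rfl⟩ := h.exists_lift_subset x hx y hy₂.1 hyx
    exact ⟨y', ⟨(h.map_mem_skel_iff hx).1 hx₁, (h.map_mem_skel_iff hy').1 hy₂, hyx'⟩, rfl⟩

theorem isCovering (h : IsInclusionCovering Xt X ρ) : IsCovering Xt X ρ where
  mem := h.mem
  surj := h.surj
  rank := h.rank
  locBij _ hx
    | .adj r₁ r₂ => h.bijOn_adj hx r₁ r₂
    | .coadj r₁ r₂ => h.bijOn_coadj hx r₁ r₂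
    | .inc r₁ r₂ => h.bijOn_inc hx r₁ r₂
    | .coinc r₁ r₂ => h.bijOn_coinc hx r₁ r₂

end IsInclusionCovering

end InclusionCovering

section Cycle

variable {n : ℕ}

theorem natCast_inj_of_lt {a b : ℕ} (ha : a < n) (hb : b < n) :
    (a : ZMod n) = b ↔ a = b := by
  refine ⟨fun h => ?_, congrArg _⟩
  rw [← ZMod.val_cast_of_lt ha, ← ZMod.val_cast_of_lt hb, h]

theorem eq_of_map_eq_of_add_eq_add {R : Type*} [CommRing R] (f : R →+* ZMod n)
    {a t₁ t₂ : R} {d₁ e₁ d₂ e₂ : ℕ} (h₁ : t₁ + d₁ = a + e₁) (h₂ : t₂ + d₂ = a + e₂)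
    (hlt₁ : d₁ + e₂ < n) (hlt₂ : d₂ + e₁ < n) (hf : f t₁ = f t₂) : t₁ = t₂ := by
  have key : t₁ + ((d₁ + e₂ : ℕ) : R) = t₂ + ((d₂ + e₁ : ℕ) : R) := by
    push_cast
    linear_combination h₁ - h₂
  have hoff : d₁ + e₂ = d₂ + e₁ := by
    have := congrArg f key
    rw [map_add, map_add, map_natCast, map_natCast, hf, add_right_inj] at this
    exact (natCast_inj_of_lt hlt₁ hlt₂).1 this
  rwa [hoff, add_left_inj] at key

def cycleCell (a : ZMod n) (b : Bool) : Finset (ZMod n) := if b then {a, a + 1} else {a}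

theorem mem_cycleCell {a x : ZMod n} {b : Bool} :
    x ∈ cycleCell a b ↔ ∃ j ≤ b.toNat, x = a + j := by
  cases b
  · simp [cycleCell]
  · simp [cycleCell, Nat.le_one_iff_eq_zero_or_eq_one]

theorem cycleCell_nonempty (a : ZMod n) (b : Bool) : (cycleCell a b).Nonempty := by
  cases b <;> simp [cycleCell]

theorem cycleCell_subset_cycleCell_iff (hn : 3 ≤ n) {a t : ZMod n} {b c : Bool} :
    cycleCell a b ⊆ cycleCell t c ↔ ∃ d : ℕ, a = t + d ∧ b.toNat + d ≤ c.toNat := by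
  constructor
  · intro h
    have ha : a ∈ cycleCell a b := by cases b <;> simp [cycleCell]
    obtain ⟨d, hdc, rfl⟩ := mem_cycleCell.1 (h ha)
    refine ⟨d, rfl, ?_⟩
    cases b
    · simpa using hdc
    · obtain ⟨e, hec, he⟩ := mem_cycleCell.1 (h (mem_cycleCell.2 ⟨1, le_rfl, rfl⟩))
      have hc := c.toNat_le
      have : d + 1 = e := by
        rw [← natCast_inj_of_lt (n := n) (by omega) (by omega)]
        push_cast
        linear_combination he
      simp only [Bool.toNat_true]
      omega
  · rintro ⟨d, rfl, hbd⟩ x hx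
    obtain ⟨j, hj, rfl⟩ := mem_cycleCell.1 hx
    exact mem_cycleCell.2 ⟨d + j, by omega, by push_cast; ring⟩

theorem cycleCell_inj (hn : 3 ≤ n) {a t : ZMod n} {b c : Bool} :
    cycleCell a b = cycleCell t c ↔ a = t ∧ b = c := by
  refine ⟨fun h => ?_, by rintro ⟨rfl, rfl⟩; rfl⟩
  obtain ⟨d, rfl, hd⟩ := (cycleCell_subset_cycleCell_iff hn).1 h.le
  obtain ⟨d', hd', hd'c⟩ := (cycleCell_subset_cycleCell_iff hn).1 h.ge
  have hb := b.toNat_le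
  have hc := c.toNat_le
  have : d + d' = 0 := by
    rw [← natCast_inj_of_lt (n := n) (by omega) (by omega)]
    push_cast
    linear_combination -hd'
  obtain rfl : d = 0 := by omega
  obtain rfl : d' = 0 := by omega
  refine ⟨by simp, ?_⟩
  cases b <;> cases c <;> simp at hd hd'c ⊢

variable {N : ℕ} (f : ZMod N →+* ZMod n)

theorem exists_lift_cycleCell_superset (hN : 3 ≤ N) (hn : 3 ≤ n) {a : ZMod N} {u : ZMod n}
    {b c : Bool} (h : cycleCell (f a) b ⊆ cycleCell u c) :
    ∃ t, cycleCell a b ⊆ cycleCell t c ∧ f t = u := by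
  obtain ⟨d, hd, hbd⟩ := (cycleCell_subset_cycleCell_iff hn).1 h
  refine ⟨a - d, (cycleCell_subset_cycleCell_iff hN).2 ⟨d, by ring, hbd⟩, ?_⟩
  rw [map_sub, map_natCast, hd, add_sub_cancel_right]

theorem exists_lift_cycleCell_subset (hN : 3 ≤ N) (hn : 3 ≤ n) {a : ZMod N} {u : ZMod n}
    {b c : Bool} (h : cycleCell u c ⊆ cycleCell (f a) b) :
    ∃ t, cycleCell t c ⊆ cycleCell a b ∧ f t = u := by
  obtain ⟨d, hd, hcd⟩ := (cycleCell_subset_cycleCell_iff hn).1 h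
  exact ⟨a + d, (cycleCell_subset_cycleCell_iff hN).2 ⟨d, rfl, hcd⟩, by
    rw [map_add, map_natCast, hd]⟩

theorem eq_of_map_eq_of_cycleCell_subset_superset (hN : 3 ≤ N) (hn : 3 ≤ n)
    {a t₁ t₂ w₁ w₂ : ZMod N} {b m₁ m₂ c₁ c₂ : Bool}
    (hx₁ : cycleCell a b ⊆ cycleCell w₁ c₁) (hy₁ : cycleCell t₁ m₁ ⊆ cycleCell w₁ c₁)
    (hx₂ : cycleCell a b ⊆ cycleCell w₂ c₂) (hy₂ : cycleCell t₂ m₂ ⊆ cycleCell w₂ c₂)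
    (hf : f t₁ = f t₂) : t₁ = t₂ := by
  obtain ⟨d₁, hd₁, hd₁c⟩ := (cycleCell_subset_cycleCell_iff hN).1 hx₁
  obtain ⟨e₁, he₁, he₁c⟩ := (cycleCell_subset_cycleCell_iff hN).1 hy₁
  obtain ⟨d₂, hd₂, hd₂c⟩ := (cycleCell_subset_cycleCell_iff hN).1 hx₂
  obtain ⟨e₂, he₂, he₂c⟩ := (cycleCell_subset_cycleCell_iff hN).1 hy₂
  have := c₁.toNat_le
  have := c₂.toNat_le
  exact eq_of_map_eq_of_add_eq_add f (a := a) (d₁ := d₁) (e₁ := e₁) (d₂ := d₂) (e₂ := e₂)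
    (by rw [hd₁, he₁]; ring) (by rw [hd₂, he₂]; ring) (by omega) (by omega) hf

theorem eq_of_map_eq_of_cycleCell_superset_subset (hN : 3 ≤ N) (hn : 3 ≤ n)
    {a t₁ t₂ w₁ w₂ : ZMod N} {b m₁ m₂ c₁ c₂ : Bool}
    (hx₁ : cycleCell w₁ c₁ ⊆ cycleCell a b) (hy₁ : cycleCell w₁ c₁ ⊆ cycleCell t₁ m₁)
    (hx₂ : cycleCell w₂ c₂ ⊆ cycleCell a b) (hy₂ : cycleCell w₂ c₂ ⊆ cycleCell t₂ m₂)
    (hf : f t₁ = f t₂) : t₁ = t₂ := by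
  obtain ⟨d₁, hd₁, hd₁c⟩ := (cycleCell_subset_cycleCell_iff hN).1 hx₁
  obtain ⟨e₁, he₁, he₁c⟩ := (cycleCell_subset_cycleCell_iff hN).1 hy₁
  obtain ⟨d₂, hd₂, hd₂c⟩ := (cycleCell_subset_cycleCell_iff hN).1 hx₂
  obtain ⟨e₂, he₂, he₂c⟩ := (cycleCell_subset_cycleCell_iff hN).1 hy₂
  have := b.toNat_le
  have := m₁.toNat_le
  have := m₂.toNat_le
  exact eq_of_map_eq_of_add_eq_add f (a := a) (d₁ := e₁) (e₁ := d₁) (d₂ := e₂) (e₂ := d₂)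
    (he₁.symm.trans hd₁) (he₂.symm.trans hd₂) (by omega) (by omega) hf

end Cycle

section Torus

variable {ℓ : ℕ} {q p : Fin ℓ → ℕ}

theorem torusCell_eq_piFinset (s : ∀ i, ZMod (q i)) (k : Fin ℓ → Bool) :
    torusCell q s k = Fintype.piFinset fun i => cycleCell (s i) (k i) := by
  ext x
  simp only [torusCell, Finset.mem_image, Finset.mem_filter, Finset.mem_univ, true_and,
    Fintype.mem_piFinset, mem_cycleCell, funext_iff]
  rw [← exists_congr fun _ => forall_and]
  refine (Classical.skolem (p := fun i (b : Bool) =>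
    (b = true → k i = true) ∧ (s i + if b then 1 else 0) = x i)).symm.trans
    (forall_congr' fun i => ?_)
  cases k i
  · simp [eq_comm]
  · simp [Nat.le_one_iff_eq_zero_or_eq_one, eq_comm]

theorem torusCell_subset_torusCell_iff {s t : ∀ i, ZMod (q i)} {k m : Fin ℓ → Bool} :
    torusCell q s k ⊆ torusCell q t m ↔ ∀ i, cycleCell (s i) (k i) ⊆ cycleCell (t i) (m i) := by
  rw [torusCell_eq_piFinset, torusCell_eq_piFinset, ← Finset.coe_subset, Fintype.coe_piFinset,
    Fintype.coe_piFinset, Set.univ_pi_subset_univ_pi_iff]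
  simp [(cycleCell_nonempty _ _).ne_empty]

theorem torusCell_inj (hq : ∀ i, 3 ≤ q i) {s t : ∀ i, ZMod (q i)} {k m : Fin ℓ → Bool} :
    torusCell q s k = torusCell q t m ↔ s = t ∧ k = m := by
  simp only [subset_antisymm_iff, torusCell_subset_torusCell_iff, ← forall_and, funext_iff]
  exact forall_congr' fun i => by rw [← subset_antisymm_iff, cycleCell_inj (hq i)]

theorem rk_torusCell (hq : ∀ i, 3 ≤ q i) (s : ∀ i, ZMod (q i)) (k : Fin ℓ → Bool) :
    (torusPre q).rk (torusCell q s k) = torusRank k := by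
  have : {r | ∃ s' k', torusCell q s k = torusCell q s' k' ∧ r = torusRank k'} =
      {torusRank k} := by
    ext r
    simp [torusCell_inj hq]
  exact (congrArg sInf this).trans (csInf_singleton _)

theorem image_torusCell (f : ∀ i, ZMod (q i) →+* ZMod (p i)) (s : ∀ i, ZMod (q i))
    (k : Fin ℓ → Bool) :
    (torusCell q s k).image (fun x i => f i (x i)) = torusCell p (fun i => f i (s i)) k := by
  simp only [torusCell, Finset.image_image]
  congr 1
  funext k' i
  simp only [Function.comp_apply, map_add, apply_ite (f i), map_one, map_zero]

theorem isInclusionCovering_torusPre (f : ∀ i, ZMod (q i) →+* ZMod (p i))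
    (hf : ∀ i, Function.Surjective (f i)) (hq : ∀ i, 3 ≤ q i) (hp : ∀ i, 3 ≤ p i) :
    IsInclusionCovering (torusPre q) (torusPre p) (Finset.image fun s i => f i (s i)) where
  mem := by
    rintro _ ⟨s, k, rfl⟩
    exact ⟨_, k, image_torusCell f s k⟩
  surj := by
    rintro _ ⟨u, k, rfl⟩
    choose s hs using fun i => hf i (u i)
    exact ⟨torusCell q s k, ⟨s, k, rfl⟩, by rw [image_torusCell, funext hs]⟩
  rank := by
    rintro _ ⟨s, k, rfl⟩
    rw [image_torusCell, rk_torusCell hp, rk_torusCell hq]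
  mono _ _ _ _ := Finset.image_subset_image
  exists_lift_superset := by
    rintro _ ⟨s, k, rfl⟩ _ ⟨u, m, rfl⟩ h
    rw [image_torusCell, torusCell_subset_torusCell_iff] at h
    choose t ht hft using fun i => exists_lift_cycleCell_superset (f i) (hq i) (hp i) (h i)
    exact ⟨torusCell q t m, ⟨t, m, rfl⟩, torusCell_subset_torusCell_iff.2 ht,
      by rw [image_torusCell, funext hft]⟩
  exists_lift_subset := by
    rintro _ ⟨s, k, rfl⟩ _ ⟨u, m, rfl⟩ h
    rw [image_torusCell, torusCell_subset_torusCell_iff] at h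
    choose t ht hft using fun i => exists_lift_cycleCell_subset (f i) (hq i) (hp i) (h i)
    exact ⟨torusCell q t m, ⟨t, m, rfl⟩, torusCell_subset_torusCell_iff.2 ht,
      by rw [image_torusCell, funext hft]⟩
  eq_of_common_superset := by
    rintro _ ⟨s, k, rfl⟩ _ ⟨t₁, m₁, rfl⟩ _ ⟨t₂, m₂, rfl⟩ _ ⟨w₁, n₁, rfl⟩ _ ⟨w₂, n₂, rfl⟩
      hx₁ hy₁ hx₂ hy₂ he
    rw [image_torusCell, image_torusCell, torusCell_inj hp, funext_iff] at he
    simp only [torusCell_subset_torusCell_iff] at hx₁ hy₁ hx₂ hy₂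
    exact (torusCell_inj hq).2 ⟨funext fun i => eq_of_map_eq_of_cycleCell_subset_superset (f i)
      (hq i) (hp i) (hx₁ i) (hy₁ i) (hx₂ i) (hy₂ i) (he.1 i), he.2⟩
  eq_of_common_subset := by
    rintro _ ⟨s, k, rfl⟩ _ ⟨t₁, m₁, rfl⟩ _ ⟨t₂, m₂, rfl⟩ _ ⟨w₁, n₁, rfl⟩ _ ⟨w₂, n₂, rfl⟩
      hx₁ hy₁ hx₂ hy₂ he
    rw [image_torusCell, image_torusCell, torusCell_inj hp, funext_iff] at he
    simp only [torusCell_subset_torusCell_iff] at hx₁ hy₁ hx₂ hy₂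
    exact (torusCell_inj hq).2 ⟨funext fun i => eq_of_map_eq_of_cycleCell_superset_subset (f i)
      (hq i) (hp i) (hx₁ i) (hy₁ i) (hx₂ i) (hy₂ i) (he.1 i), he.2⟩

theorem isCovering_torusPre_reduction (hq : ∀ i, 3 ≤ q i) (hp : ∀ i, 3 ≤ p i)
    (hpq : ∀ i, p i ∣ q i) :
    IsCovering (torusPre q) (torusPre p)
      (fun x => x.image fun s i => ((s i).val : ZMod (p i))) := by
  have : ∀ i, NeZero (q i) := fun i => ⟨by linarith [hq i]⟩
  have hred : (fun (s : ∀ i, ZMod (q i)) i => ((s i).val : ZMod (p i))) =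
      fun s i => ZMod.castHom (hpq i) _ (s i) := by
    simp only [ZMod.castHom_apply, ZMod.natCast_val]
  rw [hred]
  exact (isInclusionCovering_torusPre _ (fun i => ZMod.castHom_surjective (hpq i)) hq hp).isCovering

end Torus

/-- For tori with `p j, p' j ≥ 3`, the maps on cells induced by coordinatewise
reduction of nodes modulo `(p₁,…,p_ℓ)` resp. `(p'₁,…,p'_ℓ)` are CC coverings of
`T_{p₁,…,p_ℓ}` resp. `T_{p'₁,…,p'_ℓ}` by `T_{p₁p'₁,…,p_ℓp'_ℓ}`. -/
theorem torus_coverings {ℓ : ℕ} (p p' : Fin ℓ → ℕ)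
    (hp : ∀ j, 3 ≤ p j) (hp' : ∀ j, 3 ≤ p' j) :
    IsCovering (torusPre fun i => p i * p' i) (torusPre p)
      (fun x => x.image fun s i => ((s i).val : ZMod (p i))) ∧
    IsCovering (torusPre fun i => p i * p' i) (torusPre p')
      (fun x => x.image fun s i => ((s i).val : ZMod (p' i))) := by
  have hpp' : ∀ i, 3 ≤ p i * p' i := fun i => by nlinarith [hp i, hp' i]
  exact ⟨isCovering_torusPre_reduction hpp' hp fun i => dvd_mul_right _ _,
    isCovering_torusPre_reduction hpp' hp' fun i => dvd_mul_left _ _⟩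

end TDL
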